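/- Let h : B_π → ℂ be a real functional, quasi-invariant with weight φ, and let k ∈ U be group-like (Δ_U(k) = k⊗k, ε_U(k) = 1) with τ_U(k) = k, where τ_U := *∘S_U. Then the translated functional h_k(a) := h(k.a) is a real functional, satisfies h_k(a) = h(φ[k*]* a φ[k*]) for all a ∈ B_π (so h_k is ξ-equivalent to h with ξ = φ[k*] whenever φ[k*] is invertible in B_π), is quasi-invariant with weight φ_k[X] := φ[X S_U(k)] (S_U(k).φ[k]), and is positive whenever h is positive (h positive means h(a*a) ≥ 0 for all a ∈ B_π). -/

import Mathlib

open scoped TensorProduct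
open Coalgebra

noncomputable section
open scoped ComplexOrder

variable {F : Type*} [Ring F] [HopfAlgebra ℂ F] [StarRing F] [StarModule ℂ F]
variable {K : Type*} [AddCommGroup K] [Module ℂ K] [Coalgebra ℂ K]
variable {U : Type*} [Ring U] [HopfAlgebra ℂ U] [StarRing U] [StarModule ℂ U]

/-- The left quantum homogeneous space `B_π = {a | (π ⊗ id)(Δ a) = π(1) ⊗ a}`,
as a subspace of `F`. -/
def Bpi (π : F →ₗ[ℂ] K) : Submodule ℂ F :=
  LinearMap.ker ((LinearMap.rTensor F π ∘ₗ Coalgebra.comul) - TensorProduct.mk ℂ K F (π 1))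

/-- The left regular representation of `U` on `F`: `X.a = Σ a₍₁₎ ⟨X, a₍₂₎⟩`. -/
def lreg (p : U →ₗ[ℂ] F →ₗ[ℂ] ℂ) (X : U) : F →ₗ[ℂ] F :=
  (TensorProduct.rid ℂ F).toLinearMap ∘ₗ LinearMap.lTensor F (p X) ∘ₗ Coalgebra.comul

/-- `h` is quasi-invariant with weight `φ`:
`h(X.a) = Σ h(φ[X₍₁₎*]* ⬝ a ⬝ φ[S(X₍₂₎)])` for all `a ∈ B_π`. -/
def QuasiInvL (π : F →ₗ[ℂ] K) (p : U →ₗ[ℂ] F →ₗ[ℂ] ℂ)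
    (h : F →ₗ[ℂ] ℂ) (φ : U →ₗ[ℂ] F) : Prop :=
  ∀ X : U, ∀ a ∈ Bpi π, ∀ {ι : Type} (r : Coalgebra.Repr ℂ X ι),
    h (lreg p X a) = ∑ i ∈ r.index,
      h (star (φ (star (r.left i))) * a * φ (HopfAlgebra.antipode (R := ℂ) (r.right i)))

/-!
Because `k` is group-like, quasi-invariance at `X = k` reads `h(k.a) = h(ξ* a ξ)` with
`ξ = φ[S k] = φ[k*]`. Since `B_π` is a `*`-subalgebra containing `ξ`, reality and positivity of
`h_k` are inherited from `h`. For quasi-invariance, `h_k(X.a) = h((kX).a)` is expanded with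
`Δ(kX) = Σ kX₍₁₎ ⊗ kX₍₂₎`; the cocycle identity applied to `S(k) k = 1` gives
`(S(k).φ[k]) φ[S k] = 1`, which cancels the extra factors coming from `φ_k` and `ξ`.
-/

open HopfAlgebra

namespace Coalgebra.Repr

variable {R A : Type*} [CommSemiring R] [AddCommMonoid A] [Module R A] [CoalgebraStruct R A]

/-- Hypotheses stated for all representations quantify over index types of one fixed universe;
this moves any representation into it. -/
def toULiftFin.{w} {ι : Type*} {a : A} (r : Repr R a ι) :
    Repr R a (ULift.{w} (Fin r.index.card)) where
  index := Finset.univ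
  left i := r.left (r.index.equivFin.symm i.down)
  right i := r.right (r.index.equivFin.symm i.down)
  eq := by
    rw [← r.eq, ← Finset.sum_attach r.index]
    exact Fintype.sum_equiv (Equiv.ulift.trans r.index.equivFin.symm) _ _ fun _ => rfl

def ofIsGroupLikeElem.{w} {A : Type*} [AddCommMonoid A] [Module R A] [Coalgebra R A] {a : A}
    (ha : IsGroupLikeElem R a) : Repr R a PUnit.{w + 1} where
  index := {PUnit.unit}
  left _ := a
  right _ := a
  eq := by simp [ha.comul_eq_tmul_self]

end Coalgebra.Repr

section HopfAlgebra

variable {R A : Type*} [CommRing R] [Ring A] [HopfAlgebra R A]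

lemma sum_antipode_symm_mul_eq_smul (hS : Function.Bijective (antipode R (A := A)))
    {ι : Type*} {a : A} (r : Repr R a ι) :
    ∑ i ∈ r.index, (LinearEquiv.ofBijective _ hS).symm (r.right i) * r.left i =
      counit (R := R) a • 1 := by
  apply hS.injective
  simpa [antipode_mul_antidistrib] using sum_antipode_mul_eq_smul r

end HopfAlgebra

section HomogeneousSpace

variable {F : Type*} [Ring F] [HopfAlgebra ℂ F] {K : Type*} [AddCommGroup K] [Module ℂ K]
  {π : F →ₗ[ℂ] K}

lemma mem_Bpi {a : F} : a ∈ Bpi π ↔ LinearMap.rTensor F π (comul a) = π 1 ⊗ₜ[ℂ] a := by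
  simp [Bpi, sub_eq_zero]

lemma mem_Bpi_iff_sum {a : F} {ι : Type*} (r : Repr ℂ a ι) :
    a ∈ Bpi π ↔ ∑ i ∈ r.index, π (r.left i) ⊗ₜ[ℂ] r.right i = π 1 ⊗ₜ[ℂ] a := by
  simp [mem_Bpi, ← r.eq, map_sum]

lemma Bpi.sum_map_tmul {a : F} (ha : a ∈ Bpi π) {ι : Type*} (r : Repr ℂ a ι)
    {σ : ℂ →+* ℂ} {M : Type*} [AddCommMonoid M] [Module ℂ M] (G : K ⊗[ℂ] F →ₛₗ[σ] M) :
    ∑ i ∈ r.index, G (π (r.left i) ⊗ₜ[ℂ] r.right i) = G (π 1 ⊗ₜ[ℂ] a) := by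
  rw [← map_sum, (mem_Bpi_iff_sum r).mp ha]

lemma Bpi.mul_mem {act : F →ₗ[ℂ] K →ₗ[ℂ] K} (hact_π : ∀ a b : F, act a (π b) = π (a * b))
    {a b : F} (ha : a ∈ Bpi π) (hb : b ∈ Bpi π) : a * b ∈ Bpi π := by
  let ra := ℛ ℂ a
  let rb := ℛ ℂ b
  rw [mem_Bpi_iff_sum (ra.mul rb)]
  calc _ = ∑ i ∈ ra.index, ∑ j ∈ rb.index, TensorProduct.map (act (ra.left i))
          (LinearMap.mulLeft ℂ (ra.right i)) (π (rb.left j) ⊗ₜ[ℂ] rb.right j) := by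
        simp [Finset.sum_product, hact_π]
    _ = ∑ i ∈ ra.index, LinearMap.lTensor K (LinearMap.mulRight ℂ b)
          (π (ra.left i) ⊗ₜ[ℂ] ra.right i) := by
        simp only [Bpi.sum_map_tmul hb]
        simp [hact_π]
    _ = π 1 ⊗ₜ[ℂ] (a * b) := by
        rw [Bpi.sum_map_tmul ha]
        simp

end HomogeneousSpace

section LeftRegular

variable {F : Type*} [Ring F] [HopfAlgebra ℂ F] {U : Type*} [Ring U] [HopfAlgebra ℂ U]
  (p : U →ₗ[ℂ] F →ₗ[ℂ] ℂ)

lemma lreg_eq_sum (X : U) {a : F} {ι : Type*} (r : Repr ℂ a ι) :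
    lreg p X a = ∑ i ∈ r.index, p X (r.right i) • r.left i := by
  simp [lreg, ← r.eq]

lemma comul_lreg (X : U) (a : F) :
    comul (lreg p X a) = LinearMap.lTensor F (lreg p X) (comul a) := by
  let r := ℛ ℂ a
  have hcoassoc := congrArg (LinearMap.lTensor F ((TensorProduct.rid ℂ F).toLinearMap ∘ₗ
    LinearMap.lTensor F (p X))) (sum_tmul_tmul_eq r (fun i => ℛ ℂ (r.left i))
      (fun i => ℛ ℂ (r.right i)))
  simp only [map_sum, LinearMap.lTensor_tmul, LinearMap.comp_apply, LinearEquiv.coe_coe,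
    TensorProduct.rid_tmul, TensorProduct.tmul_smul] at hcoassoc
  conv_rhs => rw [← r.eq]
  rw [lreg_eq_sum p X r]
  simp only [map_sum, map_smul, LinearMap.lTensor_tmul, lreg_eq_sum p X (ℛ ℂ (r.right _)),
    TensorProduct.tmul_sum, TensorProduct.tmul_smul, ← (ℛ ℂ (r.left _)).eq, Finset.smul_sum]
  exact hcoassoc

lemma Bpi.lreg_mem {K : Type*} [AddCommGroup K] [Module ℂ K] {π : F →ₗ[ℂ] K} (X : U) {a : F}
    (ha : a ∈ Bpi π) : lreg p X a ∈ Bpi π := by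
  rw [mem_Bpi] at ha ⊢
  rw [comul_lreg, ← LinearMap.comp_apply, LinearMap.rTensor_comp_lTensor,
    ← LinearMap.lTensor_comp_rTensor, LinearMap.comp_apply, ha]
  simp

variable {p}

lemma pairing_lreg.{w} (hp_mul : ∀ (X Y : U) (a : F) {ι : Type w} (r : Repr ℂ a ι),
      p (X * Y) a = ∑ i ∈ r.index, p X (r.left i) * p Y (r.right i))
    (X Y : U) (a : F) : p X (lreg p Y a) = p (X * Y) a := by
  let r : Repr ℂ a (ULift.{w} (Fin _)) := (ℛ ℂ a).toULiftFin
  simp [lreg_eq_sum p Y r, hp_mul X Y a r, mul_comm]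

lemma lreg_lreg.{w} (hp_mul : ∀ (X Y : U) (a : F) {ι : Type w} (r : Repr ℂ a ι),
      p (X * Y) a = ∑ i ∈ r.index, p X (r.left i) * p Y (r.right i))
    (X Y : U) (a : F) : lreg p X (lreg p Y a) = lreg p (X * Y) a := by
  let r := ℛ ℂ a
  rw [lreg, LinearMap.comp_apply, LinearMap.comp_apply, comul_lreg, ← r.eq]
  simp [lreg_eq_sum p (X * Y) r, pairing_lreg hp_mul]

lemma lreg_antipode_weight_mul_weight_antipode.{w} {φ : U →ₗ[ℂ] F} {k : U} (hφ_one : φ 1 = 1)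
    (hφ_cocycle : ∀ (X Y : U) {ι : Type w} (r : Repr ℂ X ι),
      φ (X * Y) = ∑ i ∈ r.index, lreg p (r.left i) (φ Y) * φ (r.right i))
    (hk : IsGroupLikeElem ℂ k) :
    lreg p (antipode ℂ k) (φ k) * φ (antipode ℂ k) = 1 := by
  simpa [Repr.ofIsGroupLikeElem, hk.antipode_mul_cancel, hφ_one] using
    (hφ_cocycle (antipode ℂ k) k (Repr.ofIsGroupLikeElem hk.antipode)).symm

end LeftRegular

section StarClosed

variable {F : Type*} [Ring F] [HopfAlgebra ℂ F] {K : Type*} [AddCommGroup K] [Module ℂ K]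
  {π : F →ₗ[ℂ] K} {act : F →ₗ[ℂ] K →ₗ[ℂ] K}

lemma Bpi.sum_antipode_symm_tmul (hS : Function.Bijective (antipode ℂ (A := F)))
    (hact_π : ∀ a b : F, act a (π b) = π (a * b)) {a : F} (ha : a ∈ Bpi π)
    {ι : Type*} (r : Repr ℂ a ι) :
    ∑ i ∈ r.index, π ((LinearEquiv.ofBijective _ hS).symm (r.left i)) ⊗ₜ[ℂ] r.right i =
      π 1 ⊗ₜ[ℂ] a := by
  set e := LinearEquiv.ofBijective _ hS
  -- apply `κ ⊗ y ⊗ z ↦ S⁻¹(y)·κ ⊗ z` to `Σ π(a₁) ⊗ Δa₂ = π(1) ⊗ Δa`, then use coassociativity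
  -- and `Σ S⁻¹(a₂) a₁ = ε(a) 1`
  let Θ : K ⊗[ℂ] (F ⊗[ℂ] F) →ₗ[ℂ] K ⊗[ℂ] F :=
    LinearMap.rTensor F (TensorProduct.lift (act ∘ₗ e.symm.toLinearMap).flip) ∘ₗ
      (TensorProduct.assoc ℂ K F F).symm.toLinearMap
  have hΘ (x y z : F) : Θ (π x ⊗ₜ[ℂ] (y ⊗ₜ[ℂ] z)) = π (e.symm y * x) ⊗ₜ[ℂ] z := by
    simp [Θ, hact_π]
  let rL i := ℛ ℂ (r.left i)
  let rR i := ℛ ℂ (r.right i)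
  have hcoassoc := congrArg (Θ ∘ₗ LinearMap.rTensor (F ⊗[ℂ] F) π) (sum_tmul_tmul_eq r rL rR)
  simp only [map_sum, LinearMap.comp_apply, LinearMap.rTensor_tmul, hΘ] at hcoassoc
  have hmem := Bpi.sum_map_tmul ha r (Θ ∘ₗ LinearMap.lTensor K comul)
  simp only [LinearMap.comp_apply, LinearMap.lTensor_tmul] at hmem
  calc ∑ i ∈ r.index, π (e.symm (r.left i)) ⊗ₜ[ℂ] r.right i
      = Θ (π 1 ⊗ₜ[ℂ] comul a) := by
        simp [← r.eq, TensorProduct.tmul_sum, hΘ]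
    _ = ∑ i ∈ r.index, ∑ j ∈ (rR i).index,
          π (e.symm ((rR i).left j) * r.left i) ⊗ₜ[ℂ] (rR i).right j := by
        rw [← hmem]
        refine Finset.sum_congr rfl fun i _ => ?_
        rw [← (rR i).eq, TensorProduct.tmul_sum, map_sum]
        simp only [hΘ]
    _ = ∑ i ∈ r.index, π (∑ j ∈ (rL i).index, e.symm ((rL i).right j) * (rL i).left j)
          ⊗ₜ[ℂ] r.right i := by
        simp only [← hcoassoc, map_sum, TensorProduct.sum_tmul]
    _ = π 1 ⊗ₜ[ℂ] a := by
        simp only [e, sum_antipode_symm_mul_eq_smul, map_smul, TensorProduct.smul_tmul,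
          ← TensorProduct.tmul_sum, sum_counit_smul]

lemma Bpi.star_mem.{w} [StarRing F] [StarModule ℂ F]
    (hS : Function.Bijective (antipode ℂ (A := F)))
    (hcomul_star : ∀ (a : F) {ι : Type w} (r : Repr ℂ a ι),
      comul (star a) = ∑ i ∈ r.index, star (r.left i) ⊗ₜ[ℂ] star (r.right i))
    (hact_π : ∀ a b : F, act a (π b) = π (a * b))
    (τK : K →ₗ⋆[ℂ] K) (hτK : ∀ a : F, τK (π a) = π (star (antipode ℂ a)))
    {a : F} (ha : a ∈ Bpi π) : star a ∈ Bpi π := by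
  let r : Repr ℂ a (ULift.{w} (Fin _)) := (ℛ ℂ a).toULiftFin
  let rstar : Repr ℂ (star a) _ :=
    { index := r.index
      left i := star (r.left i)
      right i := star (r.right i)
      eq := (hcomul_star a r).symm }
  rw [mem_Bpi_iff_sum rstar]
  -- `τ_K (π (S⁻¹ x)) = π (x*)`
  have h := congrArg (TensorProduct.map τK (starLinearEquiv ℂ (A := F)).toLinearMap)
    (Bpi.sum_antipode_symm_tmul hS hact_π ha r)
  simpa [hτK, rstar] using h

end StarClosed

section Translation

variable {F : Type*} [Ring F] [HopfAlgebra ℂ F] [StarRing F]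
  {K : Type*} [AddCommGroup K] [Module ℂ K]
  {U : Type*} [Ring U] [HopfAlgebra ℂ U] [StarRing U]
  {π : F →ₗ[ℂ] K} {p : U →ₗ[ℂ] F →ₗ[ℂ] ℂ} {h : F →ₗ[ℂ] ℂ} {φ : U →ₗ[ℂ] F} {k : U}

lemma QuasiInvL.apply_of_isGroupLikeElem (hqi : QuasiInvL π p h φ) (hk : IsGroupLikeElem ℂ k)
    {a : F} (ha : a ∈ Bpi π) :
    h (lreg p k a) = h (star (φ (star k)) * a * φ (antipode ℂ k)) := by
  simpa [Repr.ofIsGroupLikeElem] using hqi k a ha (Repr.ofIsGroupLikeElem hk)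

lemma QuasiInvL.comp_lreg_of_isGroupLikeElem.{w}
    (hmul : ∀ {a b : F}, a ∈ Bpi π → b ∈ Bpi π → a * b ∈ Bpi π)
    (hstar : ∀ {a : F}, a ∈ Bpi π → star a ∈ Bpi π)
    (hp_mul : ∀ (X Y : U) (a : F) {ι : Type w} (r : Repr ℂ a ι),
      p (X * Y) a = ∑ i ∈ r.index, p X (r.left i) * p Y (r.right i))
    (hφ_mem : ∀ X : U, φ X ∈ Bpi π) (hqi : QuasiInvL π p h φ) (hk : IsGroupLikeElem ℂ k)
    (hk_star : star k = antipode ℂ k)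
    (hinv : lreg p (antipode ℂ k) (φ k) * φ (antipode ℂ k) = 1) :
    QuasiInvL π p (h ∘ₗ lreg p k)
      (LinearMap.mulRight ℂ (lreg p (antipode ℂ k) (φ k)) ∘ₗ φ ∘ₗ
        LinearMap.mulRight ℂ (antipode ℂ k)) := by
  set η := lreg p (antipode ℂ k) (φ k)
  have hη : η ∈ Bpi π := Bpi.lreg_mem p _ (hφ_mem k)
  intro X a ha ι r
  simp only [LinearMap.comp_apply, LinearMap.mulRight_apply]
  rw [lreg_lreg hp_mul, hqi (k * X) a ha ((Repr.ofIsGroupLikeElem hk).mul r)]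
  simp only [Repr.mul_index, Repr.mul_left, Repr.mul_right, Finset.sum_product,
    Repr.ofIsGroupLikeElem, Finset.sum_singleton]
  refine Finset.sum_congr rfl fun i _ => ?_
  rw [hqi.apply_of_isGroupLikeElem hk (hmul (hmul (hstar (hmul (hφ_mem _) hη)) ha)
    (hmul (hφ_mem _) hη)), star_mul k, antipode_mul_antidistrib, hk_star]
  congr 1
  have hinv' : star (φ (antipode ℂ k)) * star η = 1 := by rw [← star_mul, hinv, star_one]
  simp only [star_mul, mul_assoc, hinv, mul_one]
  simp only [← mul_assoc, hinv', one_mul]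

end Translation

theorem statement9_general
    (hcomul_star : ∀ (a : F) {ι : Type*} (r : Coalgebra.Repr ℂ a ι),
      Coalgebra.comul (star a) = ∑ i ∈ r.index, star (r.left i) ⊗ₜ[ℂ] star (r.right i))
    (hSbij : Function.Bijective (HopfAlgebra.antipode (R := ℂ) (A := F)))
    (π : F →ₗ[ℂ] K)
    (act : F →ₗ[ℂ] K →ₗ[ℂ] K)
    (hact_π : ∀ a b : F, act a (π b) = π (a * b))
    (τK : K → K)
    (hτK_add : ∀ x y : K, τK (x + y) = τK x + τK y)
    (hτK_smul : ∀ (c : ℂ) (x : K), τK (c • x) = (starRingEnd ℂ) c • τK x)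
    (hτK_π : ∀ a : F, τK (π a) = π (star (HopfAlgebra.antipode (R := ℂ) a)))
    (p : U →ₗ[ℂ] F →ₗ[ℂ] ℂ)
    (hp_mul : ∀ (X Y : U) (a : F) {ι : Type*} (r : Coalgebra.Repr ℂ a ι),
      p (X * Y) a = ∑ i ∈ r.index, p X (r.left i) * p Y (r.right i))
    (φ : U →ₗ[ℂ] F)
    (hφ_one : φ 1 = 1)
    (hφ_mem : ∀ X : U, φ X ∈ Bpi π)
    (hφ_cocycle : ∀ (X Y : U) {ι : Type*} (r : Coalgebra.Repr ℂ X ι),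
      φ (X * Y) = ∑ i ∈ r.index, lreg p (r.left i) (φ Y) * φ (r.right i))
    (h : F →ₗ[ℂ] ℂ)
    (hreal : ∀ a ∈ Bpi π, h (star a) = starRingEnd ℂ (h a))
    (hqi : QuasiInvL π p h φ)
    (k : U)
    (hk_comul : Coalgebra.comul k = k ⊗ₜ[ℂ] k)
    (hk_counit : (Coalgebra.counit k : ℂ) = 1)
    (hk_real : star (HopfAlgebra.antipode (R := ℂ) k) = k) :
    -- `h_k = h ∘ (k.·)` is a real functional
    (∀ a ∈ Bpi π, h (lreg p k (star a)) = starRingEnd ℂ (h (lreg p k a))) ∧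
    -- `h_k(a) = h(φ[k*]* a φ[k*])`, i.e. `h_k` is `ξ`-equivalent to `h` with `ξ = φ[k*]`
    (∀ a ∈ Bpi π, h (lreg p k a) = h (star (φ (star k)) * a * φ (star k))) ∧
    -- `h_k` is quasi-invariant with weight `φ_k[X] = φ[X S(k)] (S(k).φ[k])`
    QuasiInvL π p (h ∘ₗ lreg p k)
      (LinearMap.mulRight ℂ (lreg p (HopfAlgebra.antipode (R := ℂ) k) (φ k)) ∘ₗ φ ∘ₗ
        LinearMap.mulRight ℂ (HopfAlgebra.antipode (R := ℂ) k)) ∧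
    -- positivity is preserved
    ((∀ a ∈ Bpi π, 0 ≤ h (star a * a)) → ∀ a ∈ Bpi π, 0 ≤ h (lreg p k (star a * a))) := by
  have hmul {a b : F} : a ∈ Bpi π → b ∈ Bpi π → a * b ∈ Bpi π := Bpi.mul_mem hact_π
  have hstar {a : F} : a ∈ Bpi π → star a ∈ Bpi π :=
    Bpi.star_mem hSbij hcomul_star hact_π ⟨⟨τK, hτK_add⟩, hτK_smul⟩ hτK_π
  have hk : IsGroupLikeElem ℂ k := ⟨hk_counit, hk_comul⟩
  have hstar_k : star k = antipode ℂ k := by simpa using (congrArg star hk_real).symm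
  have htranslate (a : F) (ha : a ∈ Bpi π) :
      h (lreg p k a) = h (star (φ (star k)) * a * φ (star k)) := by
    rw [hqi.apply_of_isGroupLikeElem hk ha, hstar_k]
  have hξ : φ (star k) ∈ Bpi π := hφ_mem _
  refine ⟨fun a ha => ?_, htranslate, ?_, fun hpos a ha => ?_⟩
  · rw [htranslate _ (hstar ha), htranslate _ ha,
      ← hreal _ (hmul (hmul (hstar hξ) ha) hξ)]
    simp [mul_assoc]
  · exact hqi.comp_lreg_of_isGroupLikeElem hmul hstar hp_mul hφ_mem hk hstar_k
      (lreg_antipode_weight_mul_weight_antipode hφ_one hφ_cocycle hk)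
  · rw [htranslate _ (hmul (hstar ha) ha)]
    simpa [mul_assoc] using hpos _ (hmul ha hξ)

/-- Translation of a quasi-invariant functional by a real group-like element `k ∈ U`:
`h_k(a) := h(k.a)` is real, equals `a ↦ h(φ[k*]* a φ[k*])`, is quasi-invariant with weight
`φ_k[X] = φ[X S(k)] (S(k).φ[k])`, and is positive whenever `h` is positive. -/
theorem statement9
    (hcomul_star : ∀ (a : F) {ι : Type*} (r : Coalgebra.Repr ℂ a ι),
      Coalgebra.comul (star a) = ∑ i ∈ r.index, star (r.left i) ⊗ₜ[ℂ] star (r.right i))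
    (hcounit_star : ∀ a : F, (Coalgebra.counit (star a) : ℂ) = starRingEnd ℂ (Coalgebra.counit a))
    (hSbij : Function.Bijective (HopfAlgebra.antipode (R := ℂ) (A := F)))
    (hUcomul_star : ∀ (X : U) {ι : Type*} (r : Coalgebra.Repr ℂ X ι),
      Coalgebra.comul (star X) = ∑ i ∈ r.index, star (r.left i) ⊗ₜ[ℂ] star (r.right i))
    (hUcounit_star : ∀ X : U, (Coalgebra.counit (star X) : ℂ) = starRingEnd ℂ (Coalgebra.counit X))
    (hUSbij : Function.Bijective (HopfAlgebra.antipode (R := ℂ) (A := U)))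
    (π : F →ₗ[ℂ] K) (hπsurj : Function.Surjective π)
    (hπcomul : ∀ a : F, Coalgebra.comul (π a) = TensorProduct.map π π (Coalgebra.comul a))
    (hπcounit : ∀ a : F, (Coalgebra.counit (π a) : ℂ) = (Coalgebra.counit a : ℂ))
    (act : F →ₗ[ℂ] K →ₗ[ℂ] K)
    (hact_one : ∀ k : K, act 1 k = k)
    (hact_mul : ∀ (a b : F) (k : K), act (a * b) k = act a (act b k))
    (hact_π : ∀ a b : F, act a (π b) = π (a * b))
    (τK : K → K)
    (hτK_add : ∀ x y : K, τK (x + y) = τK x + τK y)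
    (hτK_smul : ∀ (c : ℂ) (x : K), τK (c • x) = (starRingEnd ℂ) c • τK x)
    (hτK_π : ∀ a : F, τK (π a) = π (star (HopfAlgebra.antipode (R := ℂ) a)))
    (p : U →ₗ[ℂ] F →ₗ[ℂ] ℂ)
    (hp_mul : ∀ (X Y : U) (a : F) {ι : Type*} (r : Coalgebra.Repr ℂ a ι),
      p (X * Y) a = ∑ i ∈ r.index, p X (r.left i) * p Y (r.right i))
    (hp_mul' : ∀ (X : U) (a b : F) {ι : Type*} (r : Coalgebra.Repr ℂ X ι),
      p X (a * b) = ∑ i ∈ r.index, p (r.left i) a * p (r.right i) b)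
    (hp_one : ∀ a : F, p 1 a = (Coalgebra.counit a : ℂ))
    (hp_one' : ∀ X : U, p X 1 = (Coalgebra.counit X : ℂ))
    (hp_antipode : ∀ (X : U) (a : F),
      p (HopfAlgebra.antipode (R := ℂ) X) a = p X (HopfAlgebra.antipode (R := ℂ) a))
    (hp_star : ∀ (X : U) (a : F),
      p (star X) a = starRingEnd ℂ (p X (star (HopfAlgebra.antipode (R := ℂ) a))))
    (φ : U →ₗ[ℂ] F)
    (hφ_one : φ 1 = 1)
    (hφ_mem : ∀ X : U, φ X ∈ Bpi π)
    (hφ_cocycle : ∀ (X Y : U) {ι : Type*} (r : Coalgebra.Repr ℂ X ι),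
      φ (X * Y) = ∑ i ∈ r.index, lreg p (r.left i) (φ Y) * φ (r.right i))
    (h : F →ₗ[ℂ] ℂ)
    (hreal : ∀ a ∈ Bpi π, h (star a) = starRingEnd ℂ (h a))
    (hqi : QuasiInvL π p h φ)
    (k : U)
    (hk_comul : Coalgebra.comul k = k ⊗ₜ[ℂ] k)
    (hk_counit : (Coalgebra.counit k : ℂ) = 1)
    (hk_real : star (HopfAlgebra.antipode (R := ℂ) k) = k) :
    -- `h_k = h ∘ (k.·)` is a real functional
    (∀ a ∈ Bpi π, h (lreg p k (star a)) = starRingEnd ℂ (h (lreg p k a))) ∧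
    -- `h_k(a) = h(φ[k*]* a φ[k*])`, i.e. `h_k` is `ξ`-equivalent to `h` with `ξ = φ[k*]`
    (∀ a ∈ Bpi π, h (lreg p k a) = h (star (φ (star k)) * a * φ (star k))) ∧
    -- `h_k` is quasi-invariant with weight `φ_k[X] = φ[X S(k)] (S(k).φ[k])`
    QuasiInvL π p (h ∘ₗ lreg p k)
      (LinearMap.mulRight ℂ (lreg p (HopfAlgebra.antipode (R := ℂ) k) (φ k)) ∘ₗ φ ∘ₗ
        LinearMap.mulRight ℂ (HopfAlgebra.antipode (R := ℂ) k)) ∧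
    -- positivity is preserved
    ((∀ a ∈ Bpi π, 0 ≤ h (star a * a)) → ∀ a ∈ Bpi π, 0 ≤ h (lreg p k (star a * a))) :=
  statement9_general hcomul_star hSbij π act hact_π τK hτK_add hτK_smul hτK_π p hp_mul φ hφ_one
    hφ_mem hφ_cocycle h hreal hqi k hk_comul hk_counit hk_real
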